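/- arXiv:1210.8340 — 6 statements merged into one kernel-verified Lean document; each statement's English description precedes it below -/
import Mathlib

section
/- Let R ≥ 2 be an integer, let B ⊂ ℤ be finite with 0 ∈ B, let d be the greatest common divisor of the elements of B, and let L ⊂ ℤ be finite with M = max L and m = min L. If x₀, x₁, …, x_{r−1} is a cycle for L with scaling factor R which is extreme for (B,L), then every cycle point x satisfies x ∈ (1/d)ℤ and m/(R−1) ≤ x ≤ M/(R−1). -/
open scoped Pointwise
open Matrix

/-- `m_B(x) = (1/#B) ∑_{b ∈ B} e^{2πi b x}`. -/
noncomputable def mB (B : Finset ℤ) (x : ℝ) : ℂ :=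
  (B.card : ℂ)⁻¹ * ∑ b ∈ B, Complex.exp (2 * (Real.pi : ℂ) * Complex.I * (b : ℂ) * (x : ℂ))

/-- The matrix `(1/√N)(e^{2πi b l / R})_{b ∈ B, l ∈ L}` associated with `(B, L)`. -/
noncomputable def hadamardMatrix (R : ℤ) (B L : Finset ℤ) : Matrix B L ℂ :=
  fun b l => ((1 / Real.sqrt B.card : ℝ) : ℂ) *
    Complex.exp (2 * (Real.pi : ℂ) * Complex.I * ((b : ℤ) : ℂ) * ((l : ℤ) : ℂ) / ((R : ℤ) : ℂ))

/-- `(B, L)` is a Hadamard pair with scaling factor `R`. -/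
def IsHadamardPair (R : ℤ) (B L : Finset ℤ) : Prop :=
  2 ≤ R ∧ (0 : ℤ) ∈ B ∧ (0 : ℤ) ∈ L ∧ B.card = L.card ∧
    hadamardMatrix R B L * (hadamardMatrix R B L)ᴴ = 1 ∧
    (hadamardMatrix R B L)ᴴ * hadamardMatrix R B L = 1

/-- `x₀, …, x_{r-1}` is a cycle for `L` (scaling factor `R`) with digits `l₀, …, l_{r-1}`. -/
def IsCycle (R : ℤ) (L : Finset ℤ) {r : ℕ} (x : Fin r → ℝ) (l : Fin r → ℤ) : Prop :=
  0 < r ∧ ∀ k : Fin r, l k ∈ L ∧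
    (x k + (l k : ℝ)) / (R : ℝ) = x ⟨(k.val + 1) % r, Nat.mod_lt _ k.pos⟩

/-- The cycle is extreme for `(B, L)`: `|m_B(x_k)| = 1` for all `k`. -/
def IsExtremeCycle (R : ℤ) (B L : Finset ℤ) {r : ℕ} (x : Fin r → ℝ) (l : Fin r → ℤ) : Prop :=
  IsCycle R L x l ∧ ∀ k : Fin r, ‖mB B (x k)‖ = 1

/-- All extreme cycle points for `(B, L)` are integers. -/
def ExtremeCyclesIntegral (R : ℤ) (B L : Finset ℤ) : Prop :=
  ∀ (r : ℕ) (x : Fin r → ℝ) (l : Fin r → ℤ),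
    IsExtremeCycle R B L x l → ∀ k : Fin r, ∃ n : ℤ, x k = (n : ℝ)

/-- `x` is representable in base `R` with digits in `L`. -/
def Representable (R : ℤ) (L : Finset ℤ) (x : ℤ) : Prop :=
  ∃ (X : ℕ → ℤ) (l : ℕ → ℤ), X 0 = x ∧ (∀ k, l k ∈ L) ∧ ∀ k, X k = R * X (k + 1) + l k

/-- `y` has the base-`R` representation with digit sequence `d`. -/
def RepWith (R : ℤ) (y : ℤ) (d : ℕ → ℤ) : Prop :=
  ∃ X : ℕ → ℤ, X 0 = y ∧ ∀ k, X k = R * X (k + 1) + d k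

/-- `L` is a complete set of representatives modulo `R`. -/
def IsCompleteResidues (R : ℤ) (L : Finset ℤ) : Prop :=
  ∀ x : ℤ, ∃! l, l ∈ L ∧ l ≡ x [ZMOD R]

/-- `A` and `A'` have disjoint differences: `(A - A) ∩ (A' - A') = {0}`. -/
def HasDisjointDiffs (A A' : Finset ℤ) : Prop :=
  (A - A) ∩ (A' - A') = ({0} : Finset ℤ)

/-- `(B, L)` and `(B', L')` are complementary Hadamard pairs with scaling factor `R`. -/
def IsComplementaryPair (R : ℤ) (B L B' L' : Finset ℤ) : Prop :=
  IsHadamardPair R B L ∧ IsHadamardPair R B' L' ∧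
    HasDisjointDiffs B B' ∧ HasDisjointDiffs L L' ∧
    IsCompleteResidues R (B + B') ∧ IsCompleteResidues R (L + L') ∧
    ExtremeCyclesIntegral R B L ∧ ExtremeCyclesIntegral R B' L' ∧
    (B + B').gcd id = 1

/-! Since `0 ∈ B`, the average `m_B(x)` of the unit vectors `e^{2πibx}` contains the vector `1`;
by strict convexity of the disc it can have modulus one only if all these vectors equal `1`,
i.e. `bx ∈ ℤ` for every `b ∈ B`, and then `dx ∈ ℤ` by Bézout. For the bounds, let `x_j` be the
largest cycle point and `x_k` its predecessor: `R x_j = x_k + l_k ≤ x_j + M`, so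
`x_j ≤ M/(R-1)`; symmetrically the smallest point is at least `m/(R-1)`. -/

open Real

open Complex in
lemma exp_two_pi_mul_I_mul_ofReal_eq_one_iff (t : ℝ) :
    exp (2 * π * I * t) = 1 ↔ ∃ n : ℤ, t = n := by
  have h2πI : (2 * π * I : ℂ) ≠ 0 := by simp [pi_ne_zero]
  rw [Complex.exp_eq_one_iff]
  refine exists_congr fun n => ?_
  rw [mul_comm (n : ℂ), mul_right_inj' h2πI, ← ofReal_intCast, ofReal_inj]

lemma eq_of_norm_average_eq_one {ι V : Type*} [NormedAddCommGroup V] [NormedSpace ℝ V]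
    [StrictConvexSpace ℝ V] {s : Finset ι} {z : ι → V} (hz : ∀ i ∈ s, ‖z i‖ ≤ 1)
    (h : ‖(s.card : ℝ)⁻¹ • ∑ i ∈ s, z i‖ = 1) {i j : ι} (hi : i ∈ s) (hj : j ∈ s) :
    z i = z j := by
  by_contra hij
  have hcard : (s.card : ℝ) ≠ 0 := by exact_mod_cast (Finset.card_pos.mpr ⟨i, hi⟩).ne'
  have hlt := norm_sum_lt_of_strictConvexSpace (w := fun _ => (s.card : ℝ)⁻¹)
    (fun _ _ => by positivity) (by simp [hcard]) hi hj hij (by simpa using hcard)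
    (by simpa using hcard) hz
  rw [← Finset.smul_sum, h] at hlt
  exact hlt.false

lemma exp_eq_one_of_norm_mB_eq_one {B : Finset ℤ} (h0B : (0 : ℤ) ∈ B) {x : ℝ}
    (hx : ‖mB B x‖ = 1) {b : ℤ} (hb : b ∈ B) :
    Complex.exp (2 * π * Complex.I * b * x) = 1 := by
  have hunit : ∀ c ∈ B, ‖Complex.exp (2 * π * Complex.I * c * x)‖ ≤ 1 := fun c _ => by
    rw [show 2 * π * Complex.I * c * x = ((2 * π * c * x : ℝ) : ℂ) * Complex.I by push_cast; ring,
      Complex.norm_exp_ofReal_mul_I]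
  have havg : mB B x = (B.card : ℝ)⁻¹ • ∑ c ∈ B, Complex.exp (2 * π * Complex.I * c * x) := by
    rw [mB, Complex.real_smul]; push_cast; rfl
  simpa using eq_of_norm_average_eq_one hunit (havg ▸ hx) hb h0B

lemma exists_int_gcd_mul_eq {α : Type*} [CommRing α] {s : Finset ℤ} {x : α}
    (h : ∀ b ∈ s, ∃ n : ℤ, (b : α) * x = n) : ∃ n : ℤ, ((s.gcd id : ℤ) : α) * x = n := by
  choose! n hn using h
  obtain ⟨g, hg⟩ := s.gcd_eq_sum_mul id
  refine ⟨∑ b ∈ s, g b * n b, ?_⟩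
  rw [hg]
  push_cast
  rw [Finset.sum_mul]
  exact Finset.sum_congr rfl fun b hb => by rw [id, ← hn b hb]; ring

lemma le_div_sub_one_of_mul_eq_add {ι K : Type*} [Finite ι] [Field K] [LinearOrder K]
    [IsStrictOrderedRing K] {σ : ι → ι} (hσ : σ.Surjective) {R M : K} (hR : 1 < R)
    {x l : ι → K} (hx : ∀ k, R * x (σ k) = x k + l k) (hl : ∀ k, l k ≤ M) (k : ι) :
    x k ≤ M / (R - 1) := by
  have : Nonempty ι := ⟨k⟩
  obtain ⟨j, hj⟩ := Finite.exists_max x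
  obtain ⟨i, rfl⟩ := hσ j
  have hmax : (R - 1) * x (σ i) ≤ M := by linarith [hx i, hl i, hj i]
  calc x k ≤ x (σ i) := hj k
    _ ≤ M / (R - 1) := by rw [le_div_iff₀ (by linarith)]; linarith

lemma div_sub_one_le_of_mul_eq_add {ι K : Type*} [Finite ι] [Field K] [LinearOrder K]
    [IsStrictOrderedRing K] {σ : ι → ι} (hσ : σ.Surjective) {R m : K} (hR : 1 < R)
    {x l : ι → K} (hx : ∀ k, R * x (σ k) = x k + l k) (hl : ∀ k, m ≤ l k) (k : ι) :
    m / (R - 1) ≤ x k := by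
  have h := le_div_sub_one_of_mul_eq_add hσ hR (x := -x) (l := -l)
    (fun k => by simp only [Pi.neg_apply]; linarith [hx k]) (fun k => neg_le_neg (hl k)) k
  rwa [Pi.neg_apply, neg_div, neg_le_neg_iff] at h

lemma cycle_succ_surjective (r : ℕ) :
    Function.Surjective fun k : Fin r => (⟨(k.val + 1) % r, Nat.mod_lt _ k.pos⟩ : Fin r) := by
  refine Finite.surjective_of_injective fun a b hab => Fin.ext ?_
  have h : a.val % r = b.val % r := Nat.ModEq.add_right_cancel' 1 (congrArg Fin.val hab)
  rwa [Nat.mod_eq_of_lt a.isLt, Nat.mod_eq_of_lt b.isLt] at h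

/-- Every point `x` of an extreme cycle for `(B, L)` satisfies
`x ∈ (1/d)ℤ` (i.e. `d·x ∈ ℤ` where `d = gcd B`) and `m/(R-1) ≤ x ≤ M/(R-1)`. -/
theorem extreme_cycle_point_bounds (R : ℤ) (hR : 2 ≤ R) (B : Finset ℤ) (h0B : (0 : ℤ) ∈ B)
    (L : Finset ℤ) (hL : L.Nonempty) (r : ℕ) (x : Fin r → ℝ) (l : Fin r → ℤ)
    (hc : IsExtremeCycle R B L x l) :
    ∀ k : Fin r,
      (∃ n : ℤ, ((B.gcd id : ℤ) : ℝ) * x k = (n : ℝ)) ∧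
      ((L.min' hL : ℝ) / ((R : ℝ) - 1) ≤ x k ∧ x k ≤ ((L.max' hL : ℝ) / ((R : ℝ) - 1))) := by
  obtain ⟨⟨-, hstep⟩, hext⟩ := hc
  have hR1 : (1 : ℝ) < R := by exact_mod_cast hR
  have hx k : (R : ℝ) * x ⟨(k.val + 1) % r, Nat.mod_lt _ k.pos⟩ = x k + l k := by
    rw [← (hstep k).2, mul_div_cancel₀ _ (by positivity)]
  intro k
  refine ⟨exists_int_gcd_mul_eq fun b hb => ?_, ?_, ?_⟩
  · rw [← exp_two_pi_mul_I_mul_ofReal_eq_one_iff, ← exp_eq_one_of_norm_mB_eq_one h0B (hext k) hb]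
    push_cast
    ring_nf
  · exact div_sub_one_le_of_mul_eq_add (cycle_succ_surjective r) hR1 hx
      (fun k => mod_cast L.min'_le _ (hstep k).1) k
  · exact le_div_sub_one_of_mul_eq_add (cycle_succ_surjective r) hR1 hx
      (fun k => mod_cast L.le_max' _ (hstep k).1) k
end

section
/- Let R ≥ 2 be an integer and let L ⊂ ℤ be a complete set of representatives modulo R. Then every integer x has a unique representation in base R using digits in L, i.e., there exist unique sequences of integers x₀ = x, x₁, x₂, … and digits l₀, l₁, … ∈ L with x_k = R x_{k+1} + l_k for all k ≥ 0. Moreover this representation is eventually periodic: there exist n₀ ≥ 0 and r ≥ 1 such that l_{n+r} = l_n for all n ≥ n₀. -/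
open scoped Pointwise
open Matrix

/-!
A digit expansion is determined by its starting value: the digit `l k` is the unique element of
`L` congruent to `X k` modulo `R`, and then `X (k + 1) = (X k - l k) / R`. Since `R ≥ 2`, the map
`y ↦ (y - l) / R` contracts towards the bounded digit set, so `X` stays in a finite interval and
must revisit a value; from there on the expansion repeats itself.
-/

def IsDigitExpansion (R : ℤ) (L : Finset ℤ) (X l : ℕ → ℤ) : Prop :=
  (∀ k, l k ∈ L) ∧ ∀ k, X k = R * X (k + 1) + l k

theorem IsCompleteResidues.eq_of_modEq {R : ℤ} {L : Finset ℤ} (hL : IsCompleteResidues R L)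
    {a b : ℤ} (ha : a ∈ L) (hb : b ∈ L) (h : a ≡ b [ZMOD R]) : a = b :=
  (hL b).unique ⟨ha, h⟩ ⟨hb, Int.ModEq.refl b⟩

theorem exists_isDigitExpansion {R : ℤ} {L : Finset ℤ} (hL : IsCompleteResidues R L) (x : ℤ) :
    ∃ X l, X 0 = x ∧ IsDigitExpansion R L X l := by
  choose d hdL hd using fun y => (hL y).exists
  let X : ℕ → ℤ := fun k => Nat.rec x (fun _ y => (y - d y) / R) k
  refine ⟨X, fun k => d (X k), rfl, fun k => hdL (X k), fun k => ?_⟩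
  have hdiv : R * X (k + 1) = X k - d (X k) := Int.mul_ediv_cancel' (hd (X k)).dvd
  show X k = R * X (k + 1) + d (X k)
  omega

theorem abs_le_max_of_eq_mul_add {R C : ℤ} (hR : 2 ≤ R) {X l : ℕ → ℤ}
    (hX : ∀ k, X k = R * X (k + 1) + l k) (hC : ∀ k, |l k| ≤ C) (k : ℕ) :
    |X k| ≤ max |X 0| C := by
  induction k with
  | zero => exact le_max_left _ _
  | succ k ih =>
    have hRX : R * |X (k + 1)| ≤ 2 * max |X 0| C := by
      calc R * |X (k + 1)| = |X k - l k| := by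
            rw [hX k, add_sub_cancel_right, abs_mul, abs_of_nonneg (by omega : (0 : ℤ) ≤ R)]
        _ ≤ |X k| + |l k| := abs_sub _ _
        _ ≤ 2 * max |X 0| C := by linarith [hC k, le_max_right |X 0| C]
    nlinarith [abs_nonneg (X (k + 1))]

namespace IsDigitExpansion

variable {R : ℤ} {L : Finset ℤ} {X l X' l' : ℕ → ℤ}

theorem digit_modEq (h : IsDigitExpansion R L X l) (k : ℕ) : l k ≡ X k [ZMOD R] :=
  Int.modEq_iff_dvd.mpr ⟨X (k + 1), by linarith [h.2 k]⟩

theorem digit_eq_and_succ_eq (hR : R ≠ 0) (hL : IsCompleteResidues R L)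
    (h : IsDigitExpansion R L X l) (h' : IsDigitExpansion R L X' l') {a b : ℕ}
    (hab : X a = X' b) : l a = l' b ∧ X (a + 1) = X' (b + 1) := by
  have hl : l a = l' b :=
    hL.eq_of_modEq (h.1 a) (h'.1 b) ((h.digit_modEq a).trans (hab ▸ (h'.digit_modEq b).symm))
  refine ⟨hl, mul_left_cancel₀ hR ?_⟩
  linarith [h.2 a, h'.2 b]

theorem shift_eq (hR : R ≠ 0) (hL : IsCompleteResidues R L)
    (h : IsDigitExpansion R L X l) (h' : IsDigitExpansion R L X' l') {a b : ℕ}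
    (hab : X a = X' b) (m : ℕ) : l (a + m) = l' (b + m) ∧ X (a + m + 1) = X' (b + m + 1) := by
  induction m with
  | zero => exact h.digit_eq_and_succ_eq hR hL h' hab
  | succ m ih => exact h.digit_eq_and_succ_eq hR hL h' ih.2

theorem eq_of_apply_zero_eq (hR : R ≠ 0) (hL : IsCompleteResidues R L)
    (h : IsDigitExpansion R L X l) (h' : IsDigitExpansion R L X' l') (h0 : X 0 = X' 0) :
    X = X' ∧ l = l' := by
  refine ⟨funext fun k => ?_, funext fun k => by simpa using (h.shift_eq hR hL h' h0 k).1⟩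
  cases k with
  | zero => exact h0
  | succ k => simpa using (h.shift_eq hR hL h' h0 k).2

theorem eventually_periodic (hR : 2 ≤ R) (hL : IsCompleteResidues R L)
    (h : IsDigitExpansion R L X l) : ∃ n₀ r : ℕ, 1 ≤ r ∧ ∀ n, n₀ ≤ n → l (n + r) = l n := by
  obtain ⟨C, hC⟩ := (L.image abs).exists_le
  set M := max |X 0| C
  have hbound : ∀ k, X k ∈ Set.Icc (-M) M := fun k => Set.mem_Icc.mpr <| abs_le.mp <|
    abs_le_max_of_eq_mul_add hR h.2 (fun k => hC _ (Finset.mem_image_of_mem _ (h.1 k))) k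
  obtain ⟨i, j, hij, hXij⟩ := (Set.finite_Icc (-M) M).exists_lt_map_eq_of_forall_mem hbound
  refine ⟨i, j - i, by omega, fun n hn => ?_⟩
  obtain ⟨m, rfl⟩ := Nat.exists_eq_add_of_le hn
  rw [show i + m + (j - i) = j + m by omega]
  exact (h.shift_eq (by omega) hL h hXij.symm m).1

end IsDigitExpansion

/-- If `L` is a complete set of representatives mod `R`, every integer has a
unique base-`R` representation with digits in `L`, and any such representation is eventually
periodic. -/
theorem unique_eventually_periodic_representation (R : ℤ) (hR : 2 ≤ R) (L : Finset ℤ)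
    (hL : IsCompleteResidues R L) (x : ℤ) :
    (∃! p : (ℕ → ℤ) × (ℕ → ℤ),
      p.1 0 = x ∧ (∀ k, p.2 k ∈ L) ∧ ∀ k, p.1 k = R * p.1 (k + 1) + p.2 k) ∧
    (∀ X l : ℕ → ℤ, X 0 = x → (∀ k, l k ∈ L) → (∀ k, X k = R * X (k + 1) + l k) →
      ∃ (n₀ r : ℕ), 1 ≤ r ∧ ∀ n, n₀ ≤ n → l (n + r) = l n) := by
  refine ⟨?_, fun X l _ hl hX => IsDigitExpansion.eventually_periodic hR hL ⟨hl, hX⟩⟩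
  obtain ⟨X, l, hX0, h⟩ := exists_isDigitExpansion hL x
  refine ⟨(X, l), ⟨hX0, h⟩, ?_⟩
  rintro ⟨Y, m⟩ ⟨hY0, hY⟩
  obtain ⟨rfl, rfl⟩ := IsDigitExpansion.eq_of_apply_zero_eq (by omega) hL hY h (hY0.trans hX0.symm)
  rfl
end

section
/- Let (B, L) be a Hadamard pair with scaling factor R such that all extreme cycle points for (B, L) are integers. Let Λ(L) be the smallest subset of ℝ which contains −x for every point x of every extreme cycle for (B, L) and which satisfies RΛ(L) + L ⊆ Λ(L). Then Λ(L) equals the set of all integers which can be represented in base R using digits in L. -/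
open scoped Pointwise
open Matrix

/-!
The digit relation `x_k + l_k = R x_{k+1}` of an integral cycle, read as
`-x_k = R (-x_{k+1}) + l_k`, makes every `-x_k` a periodic base-`R` expansion, so the
representable integers form an `L`-invariant set containing the extreme cycle points and hence
contain `Λ(L)`. Conversely, the states of an expansion `X_k = R X_{k+1} + d_k` satisfy
`R |X_{k+1}| ≤ |X_k| + max |L|`, so with `R ≥ 2` they stay bounded and some state repeats.
The stretch between two equal states is an integral, hence extreme, cycle through `-X_a`, which
puts `X_a` in `Λ(L)`; invariance then carries this back to `X_0`.
-/

theorem mB_intCast (B : Finset ℤ) (hB : B.Nonempty) (n : ℤ) : mB B n = 1 := by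
  have hexp : ∀ b ∈ B, Complex.exp (2 * Real.pi * Complex.I * b * ((n : ℝ) : ℂ)) = 1 := by
    intro b _
    have : 2 * Real.pi * Complex.I * b * ((n : ℝ) : ℂ)
        = ((b * n : ℤ) : ℂ) * (2 * Real.pi * Complex.I) := by
      push_cast; ring
    rw [this, Complex.exp_int_mul_two_pi_mul_I]
  have hcard : (B.card : ℂ) ≠ 0 := by exact_mod_cast hB.card_ne_zero
  rw [mB, Finset.sum_congr rfl hexp, Finset.sum_const, nsmul_one, inv_mul_cancel₀ hcard]

theorem Representable.mul_add {R : ℤ} {L : Finset ℤ} {n m : ℤ} (hn : Representable R L n)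
    (hm : m ∈ L) : Representable R L (R * n + m) := by
  obtain ⟨X, d, rfl, hd, hX⟩ := hn
  refine ⟨fun k => Nat.casesOn k (R * X 0 + m) X, fun k => Nat.casesOn k m d, rfl, ?_, ?_⟩
  · rintro (_ | k)
    exacts [hm, hd k]
  · rintro (_ | k)
    exacts [rfl, hX k]

section Cycle

variable {R : ℤ} {L : Finset ℤ} {r : ℕ} {x : Fin r → ℝ} {l : Fin r → ℤ}

def cycleSucc (k : Fin r) : Fin r := ⟨(k.val + 1) % r, Nat.mod_lt _ k.pos⟩

theorem IsCycle.intCast_add_eq (hR : (R : ℝ) ≠ 0) (hx : IsCycle R L x l) {n : Fin r → ℤ}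
    (hn : ∀ k, x k = n k) (k : Fin r) : n k + l k = R * n (cycleSucc k) := by
  have h := (hx.2 k).2
  rw [hn, hn, div_eq_iff hR] at h
  exact_mod_cast (by rw [h, mul_comm]; rfl : (n k : ℝ) + l k = R * n (cycleSucc k))

theorem IsCycle.representable_neg (hR : (R : ℝ) ≠ 0) (hx : IsCycle R L x l)
    {n : Fin r → ℤ} (hn : ∀ k, x k = n k) (k : Fin r) : Representable R L (-n k) := by
  refine ⟨fun j => -n (cycleSucc^[j] k), fun j => l (cycleSucc^[j] k), rfl,
    fun j => (hx.2 _).1, fun j => ?_⟩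
  have := hx.intCast_add_eq hR hn (cycleSucc^[j] k)
  simp only [Function.iterate_succ_apply']
  linarith

theorem IsCycle.isExtremeCycle_of_intCast {B : Finset ℤ} (hB : B.Nonempty)
    (hx : IsCycle R L x l) (hint : ∀ k, ∃ n : ℤ, x k = n) : IsExtremeCycle R B L x l := by
  refine ⟨hx, fun k => ?_⟩
  obtain ⟨n, hn⟩ := hint k
  rw [hn, mB_intCast B hB, norm_one]

end Cycle

section Expansion

variable {R : ℤ} {L : Finset ℤ} {X d : ℕ → ℤ}

theorem abs_le_max_of_expansion (hR : 2 ≤ R) {M : ℤ} (hd : ∀ k, |d k| ≤ M)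
    (hX : ∀ k, X k = R * X (k + 1) + d k) (k : ℕ) : |X k| ≤ max M |X 0| := by
  induction k with
  | zero => exact le_max_right _ _
  | succ k ih =>
    have hRX : R * |X (k + 1)| ≤ max M |X 0| + M := by
      rw [← abs_of_pos (by omega : 0 < R), ← abs_mul,
        (by linarith [hX k] : R * X (k + 1) = X k - d k)]
      exact (abs_sub _ _).trans (add_le_add ih (hd k))
    nlinarith [abs_nonneg (X (k + 1)), le_max_left M |X 0|]

theorem exists_lt_eq_of_expansion (hR : 2 ≤ R) (hd : ∀ k, d k ∈ L)
    (hX : ∀ k, X k = R * X (k + 1) + d k) : ∃ a b, a < b ∧ X a = X b := by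
  set C := max (∑ m ∈ L, |m|) |X 0|
  have hbound := abs_le_max_of_expansion hR
    (fun k => Finset.single_le_sum (fun m _ => abs_nonneg m) (hd k)) hX
  exact Set.Finite.exists_lt_map_eq_of_forall_mem (t := Set.Icc (-C) C)
    (fun k => abs_le.mp (hbound k)) (Set.finite_Icc _ _)

theorem isCycle_of_expansion (hR : (R : ℝ) ≠ 0) (hd : ∀ k, d k ∈ L)
    (hX : ∀ k, X k = R * X (k + 1) + d k) {a b : ℕ} (hab : a < b) (hXab : X a = X b) :
    IsCycle R L (r := b - a) (fun j => -(X (a + j) : ℝ)) (fun j => d (a + j)) := by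
  refine ⟨by omega, fun k => ⟨hd _, ?_⟩⟩
  have hnext : X (a + (k.val + 1) % (b - a)) = X (a + k.val + 1) := by
    rcases (Nat.add_one_le_of_lt k.isLt).lt_or_eq with hk | hk
    · rw [Nat.mod_eq_of_lt hk, add_assoc]
    · rw [hk, Nat.mod_self, add_zero, hXab]
      congr 1
      omega
  rw [div_eq_iff hR]
  simp only [hnext]
  have := congrArg (Int.cast : ℤ → ℝ) (hX (a + k.val))
  push_cast at this
  linear_combination -this

theorem mem_of_expansion_of_mem {S : Set ℝ}
    (hS : ∀ y ∈ S, ∀ m ∈ L, (R : ℝ) * y + m ∈ S) (hd : ∀ k, d k ∈ L)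
    (hX : ∀ k, X k = R * X (k + 1) + d k) :
    ∀ j, (X j : ℝ) ∈ S → (X 0 : ℝ) ∈ S
  | 0, h => h
  | j + 1, h => mem_of_expansion_of_mem hS hd hX j <| by
      simpa [hX j] using hS _ h _ (hd j)

end Expansion

/-- For a Hadamard pair `(B, L)` with all extreme cycle points integral, the
set `Λ(L)` — the smallest subset of `ℝ` containing `-x` for every extreme cycle point `x` and
satisfying `RΛ(L) + L ⊆ Λ(L)` — is exactly the set of integers representable in base `R` with
digits in `L`. -/
theorem spectrum_eq_representable (R : ℤ) (B L : Finset ℤ) (hBL : IsHadamardPair R B L)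
    (hcyc : ExtremeCyclesIntegral R B L) (Λ : Set ℝ)
    (hmem : ∀ (r : ℕ) (x : Fin r → ℝ) (l : Fin r → ℤ),
      IsExtremeCycle R B L x l → ∀ k : Fin r, -(x k) ∈ Λ)
    (hinv : ∀ y ∈ Λ, ∀ m ∈ L, (R : ℝ) * y + (m : ℝ) ∈ Λ)
    (hmin : ∀ S : Set ℝ,
      (∀ (r : ℕ) (x : Fin r → ℝ) (l : Fin r → ℤ),
        IsExtremeCycle R B L x l → ∀ k : Fin r, -(x k) ∈ S) →
      (∀ y ∈ S, ∀ m ∈ L, (R : ℝ) * y + (m : ℝ) ∈ S) → Λ ⊆ S) :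
    Λ = {y : ℝ | ∃ n : ℤ, (n : ℝ) = y ∧ Representable R L n} := by
  obtain ⟨hR, hB0, -, -, -, -⟩ := hBL
  have hR0 : (R : ℝ) ≠ 0 := by exact_mod_cast (by omega : R ≠ 0)
  refine Set.Subset.antisymm (hmin _ ?_ ?_) ?_
  · intro r x l hx k
    choose n hn using hcyc r x l hx
    exact ⟨-n k, by rw [hn]; push_cast; rfl, hx.1.representable_neg hR0 hn k⟩
  · rintro _ ⟨n, rfl, hn⟩ m hm
    exact ⟨R * n + m, by push_cast; rfl, hn.mul_add hm⟩
  · rintro _ ⟨n, rfl, X, d, rfl, hd, hX⟩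
    obtain ⟨a, b, hab, hXab⟩ := exists_lt_eq_of_expansion hR hd hX
    have hcycle := isCycle_of_expansion hR0 hd hX hab hXab
    have hextreme := hcycle.isExtremeCycle_of_intCast (B := B) ⟨0, hB0⟩
      fun j => ⟨-X (a + j), by push_cast; rfl⟩
    have hXa := hmem _ _ _ hextreme ⟨0, hcycle.1⟩
    exact mem_of_expansion_of_mem hinv hd hX a (by simpa using hXa)
end

section
/- Let (B, L) and (B', L') be complementary Hadamard pairs with scaling factor R. Let Λ(L) be the set of integers representable in base R using digits in L, and Λ(L') the set of integers representable in base R using digits in L'. Then Λ(L) and Λ(L') have disjoint differences: (Λ(L) − Λ(L)) ∩ (Λ(L') − Λ(L')) = {0}. -/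
open scoped Pointwise
open Matrix

/-!
If `a - c = a' - c'` with `a, c ∈ Λ(L)` and `a', c' ∈ Λ(L')`, then `a + c' = c + a'` has two
base-`R` expansions with digits in `L + L'`. Since `L + L'` is a complete residue system, the
expansion is unique, and disjointness of `L - L` and `L' - L'` then forces `a` and `c` to have
the same digits. Hence `a - c` is divisible by every power of `R`, so it vanishes.
-/

theorem IsCompleteResidues.eq_of_modEq_s4 {R : ℤ} {D : Finset ℤ} (hD : IsCompleteResidues R D)
    {d e : ℤ} (hd : d ∈ D) (he : e ∈ D) (hde : d ≡ e [ZMOD R]) : d = e :=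
  (hD e).unique ⟨hd, hde⟩ ⟨he, Int.ModEq.refl e⟩

theorem HasDisjointDiffs.eq_of_add_eq_add {A A' : Finset ℤ} (h : HasDisjointDiffs A A')
    {a c a' c' : ℤ} (ha : a ∈ A) (hc : c ∈ A) (ha' : a' ∈ A') (hc' : c' ∈ A')
    (heq : a + c' = c + a') : a = c := by
  have hmem : a - c ∈ (A - A) ∩ (A' - A') :=
    Finset.mem_inter.2 ⟨Finset.sub_mem_sub ha hc, (by linarith : a' - c' = a - c) ▸
      Finset.sub_mem_sub ha' hc'⟩
  rw [h, Finset.mem_singleton] at hmem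
  linarith

theorem representable_zero {R : ℤ} {L : Finset ℤ} (h0 : (0 : ℤ) ∈ L) : Representable R L 0 :=
  ⟨fun _ => 0, fun _ => 0, rfl, fun _ => h0, fun _ => by ring⟩

section Expansions

variable {R : ℤ} {X Y d e : ℕ → ℤ}

theorem digits_eq_of_isCompleteResidues {D : Finset ℤ} (hD : IsCompleteResidues R D)
    (hR : R ≠ 0) (hX : ∀ k, X k = R * X (k + 1) + d k) (hY : ∀ k, Y k = R * Y (k + 1) + e k)
    (hd : ∀ k, d k ∈ D) (he : ∀ k, e k ∈ D) (h0 : X 0 = Y 0) (k : ℕ) : d k = e k := by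
  have hdigit : ∀ k, X k = Y k → d k = e k := fun k hk =>
    hD.eq_of_modEq_s4 (hd k) (he k) <|
      Int.modEq_iff_dvd.2 ⟨X (k + 1) - Y (k + 1), by rw [mul_sub]; linarith [hX k, hY k]⟩
  have hXY : ∀ k, X k = Y k := by
    intro k
    induction k with
    | zero => exact h0
    | succ k ih => exact mul_left_cancel₀ hR (by linarith [hX k, hY k, hdigit k ih])
  exact hdigit k (hXY k)

theorem sub_eq_pow_mul_of_same_digits (hX : ∀ k, X k = R * X (k + 1) + d k)
    (hY : ∀ k, Y k = R * Y (k + 1) + d k) (k : ℕ) : X 0 - Y 0 = R ^ k * (X k - Y k) := by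
  induction k with
  | zero => ring
  | succ k ih => rw [ih, hX k, hY k]; ring

theorem eq_of_same_digits (hR : R.natAbs ≠ 1) (hX : ∀ k, X k = R * X (k + 1) + d k)
    (hY : ∀ k, Y k = R * Y (k + 1) + d k) : X 0 = Y 0 := by
  by_contra hne
  obtain ⟨n, hn⟩ := Int.finiteMultiplicity_iff.2 ⟨hR, sub_ne_zero.2 hne⟩
  exact hn ⟨_, sub_eq_pow_mul_of_same_digits hX hY (n + 1)⟩

end Expansions

/-- For complementary Hadamard pairs `(B, L)` and `(B', L')`, the sets
`Λ(L)` and `Λ(L')` of integers representable in base `R` with digits in `L`, resp. `L'`,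
have disjoint differences. -/
theorem spectra_disjoint_differences (R : ℤ) (B L B' L' : Finset ℤ)
    (h : IsComplementaryPair R B L B' L') :
    ({x : ℤ | Representable R L x} - {x : ℤ | Representable R L x}) ∩
      ({x : ℤ | Representable R L' x} - {x : ℤ | Representable R L' x}) = ({0} : Set ℤ) := by
  obtain ⟨⟨hR, -, h0L, -⟩, ⟨-, -, h0L', -⟩, -, hLL', -, hres, -⟩ := h
  apply Set.Subset.antisymm
  · rintro _ ⟨⟨_, ⟨Xa, la, rfl, hla, hXa⟩, _, ⟨Xc, lc, rfl, hlc, hXc⟩, rfl⟩,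
      ⟨_, ⟨Xa', la', rfl, hla', hXa'⟩, _, ⟨Xc', lc', rfl, hlc', hXc'⟩, hdiff⟩⟩
    have hsum : ∀ k, la k + lc' k = lc k + la' k :=
      digits_eq_of_isCompleteResidues hres (by omega) (X := Xa + Xc') (Y := Xc + Xa')
        (fun k => by simp only [Pi.add_apply]; linarith [hXa k, hXc' k])
        (fun k => by simp only [Pi.add_apply]; linarith [hXc k, hXa' k])
        (fun k => Finset.add_mem_add (hla k) (hlc' k))
        (fun k => Finset.add_mem_add (hlc k) (hla' k))
        (by simp only [Pi.add_apply]; linarith)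
    have hdig : ∀ k, la k = lc k := fun k =>
      hLL'.eq_of_add_eq_add (hla k) (hlc k) (hla' k) (hlc' k) (hsum k)
    have hXc_la : ∀ k, Xc k = R * Xc (k + 1) + la k := fun k => hdig k ▸ hXc k
    exact sub_eq_zero.2 <| eq_of_same_digits (by omega) hXa hXc_la
  · rintro _ rfl
    exact ⟨⟨0, representable_zero h0L, 0, representable_zero h0L, sub_zero 0⟩,
      ⟨0, representable_zero h0L', 0, representable_zero h0L', sub_zero 0⟩⟩
end

section
/- For a Hadamard matrix H define its set of invariants T(H) = { H_{j,k} · conj(H_{n,k}) · H_{n,m} · conj(H_{j,m}) : j, k, n, m indices }. If A and B are equivalent Hadamard matrices, then T(A) = T(B). -/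
open Matrix
open scoped ComplexConjugate

/-- An `N × N` complex matrix is a Hadamard matrix if it is unitary and all its entries have
absolute value `1/√N`. -/
def IsHadamardMatrix {N : ℕ} (H : Matrix (Fin N) (Fin N) ℂ) : Prop :=
  H ∈ Matrix.unitaryGroup (Fin N) ℂ ∧
    ∀ i j, ‖H i j‖ = 1 / Real.sqrt N

/-- Two Hadamard matrices are equivalent: `H' i j = cᵢ dⱼ H (π i) (ρ j)` for permutations
`π, ρ` and unimodular constants `cᵢ, dⱼ`. -/
def HadamardEquivalent {N : ℕ} (H H' : Matrix (Fin N) (Fin N) ℂ) : Prop :=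
  ∃ (π ρ : Equiv.Perm (Fin N)) (c d : Fin N → ℂ),
    (∀ i, ‖c i‖ = 1) ∧ (∀ j, ‖d j‖ = 1) ∧
    ∀ i j, H' i j = c i * d j * H (π i) (ρ j)

/-- The standard `N × N` Hadamard matrix `(1/√N)(e^{2πi jk/N})`. -/
noncomputable def stdHadamard (N : ℕ) : Matrix (Fin N) (Fin N) ℂ :=
  fun j k => ((1 / Real.sqrt N : ℝ) : ℂ) *
    Complex.exp (2 * (Real.pi : ℂ) * Complex.I * (j : ℕ) * (k : ℕ) / (N : ℂ))

/-- The invariants `T(H) = {H_{j,k} conj(H_{n,k}) H_{n,m} conj(H_{j,m})}` of a matrix. -/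
def invariants {N : ℕ} (H : Matrix (Fin N) (Fin N) ℂ) : Set ℂ :=
  {z : ℂ | ∃ j k n m : Fin N, z = H j k * conj (H n k) * H n m * conj (H j m)}

namespace Complex

theorem mul_conj_eq_one_of_norm_eq_one {z : ℂ} (hz : ‖z‖ = 1) : z * conj z = 1 := by
  rw [mul_conj', hz]
  norm_num

end Complex

theorem invariants_submatrix_perm {N : ℕ} (A : Matrix (Fin N) (Fin N) ℂ)
    (π ρ : Equiv.Perm (Fin N)) : invariants (A.submatrix π ρ) = invariants A := by
  ext z
  constructor
  · rintro ⟨j, k, n, m, rfl⟩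
    exact ⟨π j, ρ k, π n, ρ m, rfl⟩
  · rintro ⟨j, k, n, m, rfl⟩
    exact ⟨π.symm j, ρ.symm k, π.symm n, ρ.symm m, by simp⟩

/-- Each unimodular factor occurs once together with its conjugate. -/
theorem rescaled_quadruple_eq {a b u v : ℂ} (ha : ‖a‖ = 1) (hb : ‖b‖ = 1) (hu : ‖u‖ = 1)
    (hv : ‖v‖ = 1) (x y z w : ℂ) :
    a * u * x * conj (b * u * y) * (b * v * z) * conj (a * v * w) =
      x * conj y * z * conj w := by
  calc a * u * x * conj (b * u * y) * (b * v * z) * conj (a * v * w)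
      = (a * conj a) * (b * conj b) * (u * conj u) * (v * conj v) *
          (x * conj y * z * conj w) := by simp only [map_mul]; ring
    _ = x * conj y * z * conj w := by
      simp only [Complex.mul_conj_eq_one_of_norm_eq_one, ha, hb, hu, hv, one_mul]

theorem invariants_rescale {N : ℕ} (A : Matrix (Fin N) (Fin N) ℂ) {c d : Fin N → ℂ}
    (hc : ∀ i, ‖c i‖ = 1) (hd : ∀ j, ‖d j‖ = 1) :
    invariants (fun i j => c i * d j * A i j) = invariants A := by
  simp only [invariants, rescaled_quadruple_eq (hc _) (hc _) (hd _) (hd _)]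

theorem invariants_eq_of_equivalent_general (N : ℕ) (A B : Matrix (Fin N) (Fin N) ℂ)
    (h : HadamardEquivalent A B) : invariants A = invariants B := by
  obtain ⟨π, ρ, c, d, hc, hd, hB⟩ := h
  have hB' : B = fun i j => c i * d j * A.submatrix π ρ i j := funext₂ hB
  rw [hB', invariants_rescale _ hc hd, invariants_submatrix_perm]

/-- Equivalent Hadamard matrices have the same invariants. -/
theorem invariants_eq_of_equivalent (N : ℕ) (A B : Matrix (Fin N) (Fin N) ℂ)
    (hA : IsHadamardMatrix A) (hB : IsHadamardMatrix B)
    (h : HadamardEquivalent A B) : invariants A = invariants B :=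
  invariants_eq_of_equivalent_general N A B h
end

section
/- Let (B, L) and (F, G) be Hadamard pairs of sets of integers with the same scaling factor R, and suppose that b·g is a multiple of R for every b ∈ B and g ∈ G. Then the sums B + F and L + G are direct (i.e., B, F have disjoint differences and L, G have disjoint differences) and (B ⊕ F, L ⊕ G) is a Hadamard pair with scaling factor R. -/
open scoped Pointwise
open Matrix

/-! Unitarity of the matrix of a Hadamard pair `(B, L)` is the orthogonality relation
`∑_{l ∈ L} e^{2πi (b - b') l / R} = #B · [b = b']`, and its transpose, the matrix of `(L, B)`,
is unitary as well. If `x = f - f'` with `f, f' ∈ F` also lies in `B - B`,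
then `R ∣ x g` for all `g ∈ G`, so the orthogonality sum of `f, f'` over `G` equals `#G ≠ 0` and
`x = 0`; the same argument for `(L, B)` and `(G, F)` separates `L` and `G`. On `L ⊕ G` the
hypothesis `R ∣ b g` removes the cross terms, so the orthogonality sum of `b + f, b' + f'` factors
into a sum over `L` times the orthogonality sum of `f, f'` over `G`. -/

noncomputable def cexpDiv (R n : ℤ) : ℂ :=
  Complex.exp (2 * Real.pi * Complex.I * n / R)

lemma cexpDiv_add (R m n : ℤ) : cexpDiv R (m + n) = cexpDiv R m * cexpDiv R n := by
  rw [cexpDiv, cexpDiv, cexpDiv, ← Complex.exp_add]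
  push_cast
  ring_nf

lemma star_cexpDiv (R n : ℤ) : star (cexpDiv R n) = cexpDiv R (-n) := by
  rw [cexpDiv, cexpDiv, Complex.star_def, ← Complex.exp_conj]
  simp only [map_div₀, map_mul, Complex.conj_I, Complex.conj_ofReal, map_ofNat, map_intCast]
  push_cast
  ring_nf

lemma cexpDiv_eq_one_of_dvd {R n : ℤ} (h : R ∣ n) : cexpDiv R n = 1 := by
  obtain ⟨k, rfl⟩ := h
  rcases eq_or_ne R 0 with rfl | hR
  · simp [cexpDiv]
  · have hR' : (R : ℂ) ≠ 0 := Int.cast_ne_zero.mpr hR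
    rw [cexpDiv, ← Complex.exp_int_mul_two_pi_mul_I k]
    push_cast
    field_simp

lemma hadamardMatrix_mul_star (R : ℤ) (S T : Finset ℤ) (s s' : S) (t t' : T) :
    hadamardMatrix R S T s t * star (hadamardMatrix R S T s' t') =
      (S.card : ℂ)⁻¹ * cexpDiv R (s * t - s' * t') := by
  have hsqrt : ((1 / Real.sqrt S.card : ℝ) : ℂ) * ((1 / Real.sqrt S.card : ℝ) : ℂ) =
      (S.card : ℂ)⁻¹ := by
    rw [← Complex.ofReal_mul, one_div_mul_one_div, Real.mul_self_sqrt (Nat.cast_nonneg _)]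
    simp
  have hentry (s : S) (t : T) :
      hadamardMatrix R S T s t = ((1 / Real.sqrt S.card : ℝ) : ℂ) * cexpDiv R (s * t) := by
    rw [hadamardMatrix, cexpDiv]
    push_cast
    ring_nf
  rw [hentry, hentry, star_mul', star_cexpDiv, Complex.star_def, Complex.conj_ofReal,
    mul_mul_mul_comm, hsqrt, ← cexpDiv_add, sub_eq_add_neg]

lemma hadamardMatrix_mul_conjTranspose_apply (R : ℤ) (S T : Finset ℤ) (s s' : S) :
    (hadamardMatrix R S T * (hadamardMatrix R S T)ᴴ) s s' =
      (S.card : ℂ)⁻¹ * ∑ t ∈ T, cexpDiv R ((s - s') * t) := by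
  simp only [mul_apply, conjTranspose_apply, hadamardMatrix_mul_star, ← Finset.mul_sum, sub_mul]
  rw [Finset.sum_coe_sort T (fun t => cexpDiv R (s * t - s' * t))]

lemma hadamardMatrix_transpose (R : ℤ) {B L : Finset ℤ} (hcard : B.card = L.card) :
    (hadamardMatrix R B L)ᵀ = hadamardMatrix R L B := by
  ext l b
  simp only [transpose_apply, hadamardMatrix, hcard]
  ring_nf

namespace IsHadamardPair

variable {R : ℤ} {B L : Finset ℤ}

lemma symm (hBL : IsHadamardPair R B L) : IsHadamardPair R L B := by
  obtain ⟨hR, hB, hL, hcard, hmul, hmul'⟩ := hBL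
  refine ⟨hR, hL, hB, hcard.symm, ?_, ?_⟩ <;> rw [← hadamardMatrix_transpose R hcard,
    conjTranspose_transpose_eq_transpose_conjTranspose, ← transpose_mul, transpose_eq_one]
  exacts [hmul', hmul]

lemma sum_cexpDiv (hBL : IsHadamardPair R B L) {b b' : ℤ} (hb : b ∈ B) (hb' : b' ∈ B) :
    ∑ l ∈ L, cexpDiv R ((b - b') * l) = if b = b' then (B.card : ℂ) else 0 := by
  have hN : (B.card : ℂ) ≠ 0 := Nat.cast_ne_zero.mpr (Finset.card_ne_zero_of_mem hb)
  have hentry := congrFun (congrFun hBL.2.2.2.2.1 ⟨b, hb⟩) ⟨b', hb'⟩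
  simp only [hadamardMatrix_mul_conjTranspose_apply, one_apply, Subtype.mk.injEq,
    inv_mul_eq_iff_eq_mul₀ hN] at hentry
  simpa using hentry

lemma of_sum_cexpDiv (hR : 2 ≤ R) (hB : 0 ∈ B) (hL : 0 ∈ L) (hcard : B.card = L.card)
    (horth : ∀ b ∈ B, ∀ b' ∈ B,
      ∑ l ∈ L, cexpDiv R ((b - b') * l) = if b = b' then (B.card : ℂ) else 0) :
    IsHadamardPair R B L := by
  have hmul : hadamardMatrix R B L * (hadamardMatrix R B L)ᴴ = 1 := by
    ext s s'
    have hN : (B.card : ℂ) ≠ 0 := Nat.cast_ne_zero.mpr (Finset.card_ne_zero_of_mem hB)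
    rw [hadamardMatrix_mul_conjTranspose_apply, horth s s.2 s' s'.2]
    by_cases hss : s = s' <;> simp [one_apply, hss, hN]
  refine ⟨hR, hB, hL, hcard, hmul, (mul_eq_one_comm_of_card_eq _ _ _ ?_).mp hmul⟩
  simpa using hcard

lemma eq_of_dvd (hBL : IsHadamardPair R B L) {b b' : ℤ} (hb : b ∈ B) (hb' : b' ∈ B)
    (hdvd : ∀ l ∈ L, R ∣ (b - b') * l) : b = b' := by
  have hsum := hBL.sum_cexpDiv hb hb'
  rw [Finset.sum_congr rfl fun l hl => cexpDiv_eq_one_of_dvd (hdvd l hl), Finset.sum_const,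
    nsmul_one, ← hBL.2.2.2.1] at hsum
  by_contra hne
  rw [if_neg hne, Nat.cast_eq_zero] at hsum
  exact Finset.card_ne_zero_of_mem hb hsum

lemma hasDisjointDiffs_of_dvd (hBL : IsHadamardPair R B L) {A : Finset ℤ} (hA : 0 ∈ A)
    (hdvd : ∀ a ∈ A, ∀ l ∈ L, R ∣ a * l) : HasDisjointDiffs A B := by
  refine Finset.eq_singleton_iff_unique_mem.mpr ⟨?_, fun x hx => ?_⟩
  · exact Finset.mem_inter.mpr ⟨by simpa using Finset.sub_mem_sub hA hA,
      by simpa using Finset.sub_mem_sub hBL.2.1 hBL.2.1⟩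
  obtain ⟨⟨a, ha, a', ha', rfl⟩, ⟨b, hb, b', hb', hx⟩⟩ :=
    And.imp Finset.mem_sub.mp Finset.mem_sub.mp (Finset.mem_inter.mp hx)
  have hbb' : b = b' := hBL.eq_of_dvd hb hb' fun l hl => by
    rw [hx, sub_mul]
    exact dvd_sub (hdvd a ha l hl) (hdvd a' ha' l hl)
  rw [← hx, hbb', sub_self]

end IsHadamardPair

namespace HasDisjointDiffs

variable {A A' : Finset ℤ}

lemma symm (h : HasDisjointDiffs A A') : HasDisjointDiffs A' A := by
  rwa [HasDisjointDiffs, Finset.inter_comm]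

lemma add_eq_add_iff (h : HasDisjointDiffs A A') {a b a' b' : ℤ} (ha : a ∈ A) (hb : b ∈ A)
    (ha' : a' ∈ A') (hb' : b' ∈ A') : a + a' = b + b' ↔ a = b ∧ a' = b' := by
  refine ⟨fun hsum => ?_, fun ⟨rfl, rfl⟩ => rfl⟩
  have hmem : a - b ∈ (A - A) ∩ (A' - A') := Finset.mem_inter.mpr ⟨Finset.sub_mem_sub ha hb,
    by rw [show a - b = b' - a' by omega]; exact Finset.sub_mem_sub hb' ha'⟩
  rw [h, Finset.mem_singleton] at hmem
  omega

lemma injOn_add (h : HasDisjointDiffs A A') :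
    Set.InjOn (fun p : ℤ × ℤ => p.1 + p.2) (A ×ˢ A' : Finset (ℤ × ℤ)) := by
  rintro ⟨a, a'⟩ hp ⟨b, b'⟩ hq hsum
  simp only [Finset.coe_product, Set.mem_prod, Finset.mem_coe] at hp hq
  exact Prod.ext_iff.mpr ((h.add_eq_add_iff hp.1 hq.1 hp.2 hq.2).mp hsum)

lemma card_add (h : HasDisjointDiffs A A') : (A + A').card = A.card * A'.card := by
  rw [Finset.add_def, Finset.card_image_of_injOn h.injOn_add, Finset.card_product]

lemma sum_add {M : Type*} [AddCommMonoid M] (h : HasDisjointDiffs A A') (φ : ℤ → M) :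
    ∑ x ∈ A + A', φ x = ∑ a ∈ A, ∑ a' ∈ A', φ (a + a') := by
  rw [Finset.add_def, Finset.sum_image h.injOn_add, Finset.sum_product]

end HasDisjointDiffs

lemma sum_cexpDiv_add_of_dvd {R : ℤ} {L G : Finset ℤ} (hLG : HasDisjointDiffs L G) {d e : ℤ}
    (hdvd : ∀ g ∈ G, R ∣ (d - e) * g) :
    ∑ x ∈ L + G, cexpDiv R (d * x) =
      (∑ l ∈ L, cexpDiv R (d * l)) * ∑ g ∈ G, cexpDiv R (e * g) := by
  rw [hLG.sum_add, Finset.sum_mul_sum]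
  refine Finset.sum_congr rfl fun l _ => Finset.sum_congr rfl fun g hg => ?_
  rw [show d * (l + g) = d * l + e * g + (d - e) * g by ring, cexpDiv_add, cexpDiv_add,
    cexpDiv_eq_one_of_dvd (hdvd g hg), mul_one]

lemma IsHadamardPair.add {R : ℤ} {B L F G : Finset ℤ} (hBL : IsHadamardPair R B L)
    (hFG : IsHadamardPair R F G) (hBF : HasDisjointDiffs B F) (hLG : HasDisjointDiffs L G)
    (hdvd : ∀ b ∈ B, ∀ g ∈ G, R ∣ b * g) : IsHadamardPair R (B + F) (L + G) := by
  refine .of_sum_cexpDiv hBL.1 (by simpa using Finset.add_mem_add hBL.2.1 hFG.2.1)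
    (by simpa using Finset.add_mem_add hBL.2.2.1 hFG.2.2.1)
    (by rw [hBF.card_add, hLG.card_add, hBL.2.2.2.1, hFG.2.2.2.1]) ?_
  rintro _ hs _ hs'
  obtain ⟨b, hb, f, hf, rfl⟩ := Finset.mem_add.mp hs
  obtain ⟨b', hb', f', hf', rfl⟩ := Finset.mem_add.mp hs'
  rw [sum_cexpDiv_add_of_dvd (e := f - f') hLG fun g hg => ?_, hFG.sum_cexpDiv hf hf']
  · by_cases hff : f = f'
    · subst hff
      simp only [if_true, add_sub_add_right_eq_sub, hBL.sum_cexpDiv hb hb', add_left_inj,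
        hBF.card_add]
      split_ifs <;> push_cast <;> ring
    · rw [if_neg hff, mul_zero,
        if_neg fun hsum => hff ((hBF.add_eq_add_iff hb hb' hf hf').mp hsum).2]
  · rw [show (b + f - (b' + f') - (f - f')) * g = b * g - b' * g by ring]
    exact dvd_sub (hdvd b hb g hg) (hdvd b' hb' g hg)

/-- If `(B, L)` and `(F, G)` are Hadamard pairs with the same scaling
factor `R` and `R ∣ b·g` for all `b ∈ B`, `g ∈ G`, then the sums `B + F` and `L + G` are
direct and `(B ⊕ F, L ⊕ G)` is a Hadamard pair with scaling factor `R`. -/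
theorem hadamard_pair_direct_sum (R : ℤ) (B L F G : Finset ℤ)
    (hBL : IsHadamardPair R B L) (hFG : IsHadamardPair R F G)
    (h : ∀ b ∈ B, ∀ g ∈ G, R ∣ b * g) :
    HasDisjointDiffs B F ∧ HasDisjointDiffs L G ∧ IsHadamardPair R (B + F) (L + G) := by
  have hBF : HasDisjointDiffs B F := hFG.hasDisjointDiffs_of_dvd hBL.2.1 h
  have hLG : HasDisjointDiffs L G :=
    (hBL.symm.hasDisjointDiffs_of_dvd hFG.2.2.1 fun g hg b hb => mul_comm b g ▸ h b hb g hg).symm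
  exact ⟨hBF, hLG, hBL.add hFG hBF hLG h⟩
end
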